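/- Let p be a prime and let f, e, b be positive integers with p ∤ e. Set N = p^f − 1, g = gcd(b, e), and G = gcd(N, e). Then for every residue class c modulo N, the number of pairs (x, y) with x ∈ {0, 1, …, N−1} and y ∈ {1, …, G} such that x·(e/g) + y·(b/g) ≡ c (mod N) is exactly G. In other words, the values x·(e/g) + y·(b/g) mod N are equidistributed among the N residue classes, with each class attained exactly G times. -/

import Mathlib

open Polynomial

noncomputable section

set_option synthInstance.maxHeartbeats 1000000
set_option maxHeartbeats 2000000

/-- The composite algebra structure `ℤ_[p] → ℚ_[p] → K`. -/
instance algZp (p : ℕ) [Fact p.Prime] (K : Type) [Field K] [Algebra ℚ_[p] K] :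
    Algebra ℤ_[p] K :=
  ((algebraMap ℚ_[p] K).comp (algebraMap ℤ_[p] ℚ_[p])).toAlgebra

/-- The ring of integers of a `p`-adic field `K`: the integral closure of `ℤ_p` in `K`. -/
def Oint (p : ℕ) [Fact p.Prime] (K : Type) [Field K] [Algebra ℚ_[p] K] :
    Subalgebra ℤ_[p] K :=
  integralClosure ℤ_[p] K

/-- The maximal ideal of the ring of integers (the Jacobson radical of `⊥`, which is the
maximal ideal since the ring of integers of a `p`-adic field is local). -/
def mIdeal (p : ℕ) [Fact p.Prime] (K : Type) [Field K] [Algebra ℚ_[p] K] :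
    Ideal ↥(Oint p K) :=
  (⊥ : Ideal ↥(Oint p K)).jacobson

/-- The cardinality `q = p^{f(K)}` of the residue field of `K`. -/
def resCard (p : ℕ) [Fact p.Prime] (K : Type) [Field K] [Algebra ℚ_[p] K] : ℕ :=
  Nat.card (↥(Oint p K) ⧸ mIdeal p K)

/-- The absolute inertia degree `f(K)`, so that the residue field has cardinality `p^{f(K)}`. -/
def absf (p : ℕ) [Fact p.Prime] (K : Type) [Field K] [Algebra ℚ_[p] K] : ℕ :=
  (resCard p K).factorization p

/-- The absolute ramification index `e(K)`, defined by `p·O_K = 𝔪_K^{e(K)}`. -/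
def abse (p : ℕ) [Fact p.Prime] (K : Type) [Field K] [Algebra ℚ_[p] K] : ℕ :=
  sSup {n : ℕ | Ideal.map (algebraMap ℤ_[p] ↥(Oint p K)) (Ideal.span {(p : ℤ_[p])}) ≤ (mIdeal p K) ^ n}

/-- A finite separable field extension of the `p`-adic field `K`. -/
structure PadicFieldExt (p : ℕ) [Fact p.Prime] (K : Type) [Field K] [Algebra ℚ_[p] K] where
  carrier : Type
  [fieldInst : Field carrier]
  [algQp : Algebra ℚ_[p] carrier]
  [algK : Algebra K carrier]
  [tower : IsScalarTower ℚ_[p] K carrier]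
  [findim : FiniteDimensional K carrier]
  [sep : Algebra.IsSeparable K carrier]

attribute [instance] PadicFieldExt.fieldInst PadicFieldExt.algQp PadicFieldExt.algK
  PadicFieldExt.tower PadicFieldExt.findim PadicFieldExt.sep

open MeasureTheory

/-- The relative ramification index `e(L/K) = e(L)/e(K)`. -/
def eRel (p : ℕ) [Fact p.Prime] (K : Type) [Field K] [Algebra ℚ_[p] K]
    (L : PadicFieldExt p K) : ℕ :=
  abse p L.carrier / abse p K

/-- The relative inertia degree `f(L/K) = f(L)/f(K)`. -/
def fRel (p : ℕ) [Fact p.Prime] (K : Type) [Field K] [Algebra ℚ_[p] K]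
    (L : PadicFieldExt p K) : ℕ :=
  absf p L.carrier / absf p K

/-- `A` is an étale `K`-algebra whose splitting type over `K` is the multiset `σ` of pairs
`(e_i, f_i)`. -/
def IsEtaleWithSplittingType (p : ℕ) [Fact p.Prime] (K : Type) [Field K] [Algebra ℚ_[p] K]
    (A : Type) [CommRing A] [Algebra K A] (σ : Multiset (ℕ × ℕ)) : Prop :=
  ∃ (m : ℕ) (L : Fin m → PadicFieldExt p K),
    Nonempty (A ≃ₐ[K] ((i : Fin m) → (L i).carrier)) ∧
      Multiset.map (fun i => (eRel p K (L i), fRel p K (L i)))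
        (Finset.univ : Finset (Fin m)).val = σ

/-- `A` is an étale `K`-algebra, i.e. a finite product of finite separable field extensions. -/
def IsEtaleAlg (p : ℕ) [Fact p.Prime] (K : Type) [Field K] [Algebra ℚ_[p] K]
    (A : Type) [CommRing A] [Algebra K A] : Prop :=
  ∃ (m : ℕ) (L : Fin m → PadicFieldExt p K),
    Nonempty (A ≃ₐ[K] ((i : Fin m) → (L i).carrier))

/-- The canonical (`𝔪`-adic, i.e. `p`-adic) topology on the ring of integers. -/
instance OintTop (p : ℕ) [Fact p.Prime] (K : Type) [Field K] [Algebra ℚ_[p] K] :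
    TopologicalSpace ↥(Oint p K) :=
  (mIdeal p K).adicTopology

/-- The Borel σ-algebra on the ring of integers. -/
instance OintMeas (p : ℕ) [Fact p.Prime] (K : Type) [Field K] [Algebra ℚ_[p] K] :
    MeasurableSpace ↥(Oint p K) :=
  borel _

/-- The polynomial `∑ a_i x^i` of degree at most `n` attached to a coefficient vector
`a ∈ O_K^{n+1}`. -/
def coeffPoly (p : ℕ) [Fact p.Prime] (K : Type) [Field K] [Algebra ℚ_[p] K] {n : ℕ}
    (a : Fin (n + 1) → ↥(Oint p K)) : Polynomial K :=
  ∑ i : Fin (n + 1), Polynomial.C ((a i : K)) * Polynomial.X ^ (i : ℕ)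

/-- The monic polynomial `x^n + ∑ a_i x^i` attached to a vector `a ∈ O_K^n` of non-leading
coefficients. -/
def monicPoly (p : ℕ) [Fact p.Prime] (K : Type) [Field K] [Algebra ℚ_[p] K] {n : ℕ}
    (a : Fin n → ↥(Oint p K)) : Polynomial K :=
  Polynomial.X ^ n + ∑ i : Fin n, Polynomial.C ((a i : K)) * Polynomial.X ^ (i : ℕ)

/-- The degree `n = ∑ e_i f_i` of a splitting type. -/
def stDeg (σ : Multiset (ℕ × ℕ)) : ℕ := (σ.map fun x => x.1 * x.2).sum

/-- The set of coefficient vectors of polynomials of degree exactly `n = ∑ e_i f_i`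
generating an étale `K`-algebra with splitting type `σ`; its Haar measure is `ρ(σ, K)`. -/
def rhoSet (p : ℕ) [Fact p.Prime] (K : Type) [Field K] [Algebra ℚ_[p] K]
    (σ : Multiset (ℕ × ℕ)) : Set (Fin (stDeg σ + 1) → ↥(Oint p K)) :=
  {a | (coeffPoly p K a).degree = (stDeg σ : WithBot ℕ) ∧
    IsEtaleWithSplittingType p K (Polynomial K ⧸ Ideal.span {coeffPoly p K a}) σ}

/-- The set of (non-leading coefficient vectors of) monic polynomials of degree `n`
generating an étale `K`-algebra with splitting type `σ`; its Haar measure is `α(σ, K)`. -/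
def alphaSet (p : ℕ) [Fact p.Prime] (K : Type) [Field K] [Algebra ℚ_[p] K]
    (σ : Multiset (ℕ × ℕ)) : Set (Fin (stDeg σ) → ↥(Oint p K)) :=
  {a | IsEtaleWithSplittingType p K (Polynomial K ⧸ Ideal.span {monicPoly p K a}) σ}

/-- As `alphaSet`, with all non-leading coefficients in `𝔪_K` (i.e. `P ≡ x^n mod 𝔪_K`);
its Haar measure is `β(σ, K)`. -/
def betaSet (p : ℕ) [Fact p.Prime] (K : Type) [Field K] [Algebra ℚ_[p] K]
    (σ : Multiset (ℕ × ℕ)) : Set (Fin (stDeg σ) → ↥(Oint p K)) :=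
  {a | (∀ i, a i ∈ mIdeal p K) ∧
    IsEtaleWithSplittingType p K (Polynomial K ⧸ Ideal.span {monicPoly p K a}) σ}

/-- `w(d) = (q^{d+1} - q^d) / (q^{d+1} - 1)`, with `w(0) = 1`. -/
def wfun (q d : ℕ) : ℝ :=
  if d = 0 then 1 else ((q : ℝ) ^ (d + 1) - (q : ℝ) ^ d) / ((q : ℝ) ^ (d + 1) - 1)

/-- The discriminant of a polynomial `g` over `K`: the product `∏_{i ≠ j} (β_i - β_j)` over the
roots of `g` (with multiplicity) in an algebraic closure.  For a linear (or constant)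
polynomial this is the empty product `1`. -/
def polyDisc (K : Type) [Field K] (g : Polynomial K) : AlgebraicClosure K :=
  let l := ((g.map (algebraMap K (AlgebraicClosure K))).roots).toList
  ∏ i : Fin l.length, ∏ j : Fin l.length, if i ≠ j then l.get i - l.get j else 1

/-- The discriminant `Δ(x)` of the minimal polynomial of an element `x` of a `K`-algebra. -/
def elemDisc (K : Type) [Field K] (A : Type) [CommRing A] [Algebra K A] (x : A) :
    AlgebraicClosure K :=
  polyDisc K (minpoly K x)

/-- The valuation `v_K`, normalized so that `v_K(π_K) = 1` for a uniformizer `π_K` of `K`,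
extended (with rational values) to any field `F` over `ℚ_p`: for `x` algebraic over `ℚ_p`,
`v_K(x) = e(K) · v_p(N(x)) / [ℚ_p(x) : ℚ_p]`, computed via the minimal polynomial of `x`. -/
def vK (p : ℕ) [Fact p.Prime] (K : Type) [Field K] [Algebra ℚ_[p] K]
    (F : Type) [Field F] [Algebra ℚ_[p] F] (x : F) : ℚ :=
  (abse p K : ℚ) * (((minpoly ℚ_[p] x).coeff 0).valuation : ℚ) /
    ((minpoly ℚ_[p] x).natDegree : ℚ)

/-- `x` generates `A` over `K`, i.e. `K[x] = A`. -/
def Generates (K : Type) [Field K] (A : Type) [CommRing A] [Algebra K A] (x : A) : Prop :=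
  Algebra.adjoin K {x} = ⊤

/-- The number of new roots of `P` iners `U ⊆ A`: roots `α ∈ U` of `P` with `K[α] = A`. -/
def Znew (K : Type) [Field K] (A : Type) [CommRing A] [Algebra K A] (U : Set A)
    (P : Polynomial K) : ℕ :=
  Nat.card {α : A // α ∈ U ∧ Polynomial.aeval α P = 0 ∧ Generates K A α}

/-- `P` has a new root in `U ⊆ A`. -/
def HasNewRootIn (K : Type) [Field K] (A : Type) [CommRing A] [Algebra K A]
    (P : Polynomial K) (U : Set A) : Prop :=
  ∃ α ∈ U, Polynomial.aeval α P = 0 ∧ Generates K A α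

/-- The expected number `E[Z^new_{U,A}]` of new roots in `U ⊆ A` of a random polynomial of
degree at most `dim_K A`, where `μf k` is the Haar probability measure on `O_K^{k+1}`. -/
def Enew (p : ℕ) [Fact p.Prime] (K : Type) [Field K] [Algebra ℚ_[p] K]
    (μf : (k : ℕ) → Measure (Fin (k + 1) → ↥(Oint p K)))
    (A : Type) [CommRing A] [Algebra K A] (U : Set A) : ℝ :=
  ∫ a : Fin (Module.finrank K A + 1) → ↥(Oint p K),
    (Znew K A U (coeffPoly p K a) : ℝ) ∂(μf (Module.finrank K A))

/-- The element of `∏ L_i` attached to a vector of integral elements. -/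
def piElem (p : ℕ) [Fact p.Prime] (K : Type) [Field K] [Algebra ℚ_[p] K] {m : ℕ}
    (L : Fin m → PadicFieldExt p K) (α : (i : Fin m) → ↥(Oint p (L i).carrier)) :
    (i : Fin m) → (L i).carrier :=
  fun i => (α i : (L i).carrier)




lemma aux_range_filter_cast_card (d k : ℕ) (hd : 0 < d) (z : ZMod d) :
    ((Finset.range (k * d)).filter (fun x : ℕ => (x : ZMod d) = z)).card = k := by
  haveI : NeZero d := ⟨hd.ne'⟩
  have himg : (Finset.range (k * d)).filter (fun x : ℕ => (x : ZMod d) = z)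
      = (Finset.range k).image (fun j => z.val + j * d) := by
    ext x
    simp only [Finset.mem_filter, Finset.mem_range, Finset.mem_image]
    constructor
    · rintro ⟨hx, hcast⟩
      refine ⟨x / d, (Nat.div_lt_iff_lt_mul hd).2 hx, ?_⟩
      have hv : (x : ZMod d).val = x % d := ZMod.val_natCast d x
      rw [hcast] at hv
      have h1 := Nat.mod_add_div x d
      have h2 : d * (x / d) = (x / d) * d := Nat.mul_comm _ _
      omega
    · rintro ⟨j, hj, rfl⟩
      have hzv : z.val < d := ZMod.val_lt z
      constructor
      · calc z.val + j * d < (j + 1) * d := by nlinarith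
          _ ≤ k * d := Nat.mul_le_mul_right _ hj
      · push_cast [ZMod.natCast_self, ZMod.natCast_zmod_val]
        ring
  rw [himg, Finset.card_image_of_injective _ ?_, Finset.card_range]
  intro a b hab
  simp only at hab
  have := Nat.eq_of_mul_eq_mul_right hd (by omega : a * d = b * d)
  omega

lemma aux_icc_filter_cast_card (d k : ℕ) (hd : 0 < d) (z : ZMod d) :
    ((Finset.Icc 1 (k * d)).filter (fun y : ℕ => (y : ZMod d) = z)).card = k := by
  haveI : NeZero d := ⟨hd.ne'⟩
  have himg : (Finset.Icc 1 (k * d)).filter (fun y : ℕ => (y : ZMod d) = z)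
      = (Finset.range k).image (fun j => (z - 1).val + 1 + j * d) := by
    ext y
    simp only [Finset.mem_filter, Finset.mem_Icc, Finset.mem_image, Finset.mem_range]
    constructor
    · rintro ⟨⟨hy1, hy2⟩, hcast⟩
      refine ⟨(y - 1) / d, ?_, ?_⟩
      · exact (Nat.div_lt_iff_lt_mul hd).2 (by omega)
      · have h0 : (y - 1) + 1 = y := by omega
        have hc1 : ((y - 1 : ℕ) : ZMod d) = z - 1 := by
          have h' : ((y - 1 : ℕ) : ZMod d) + 1 = z := by
            calc ((y - 1 : ℕ) : ZMod d) + 1 = (((y - 1) + 1 : ℕ) : ZMod d) := by push_cast; ring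
              _ = z := by rw [h0, hcast]
          linear_combination h'
        have hv : ((y - 1 : ℕ) : ZMod d).val = (y - 1) % d := ZMod.val_natCast d _
        rw [hc1] at hv
        have h1 := Nat.mod_add_div (y - 1) d
        have h2 : d * ((y - 1) / d) = ((y - 1) / d) * d := Nat.mul_comm _ _
        omega
    · rintro ⟨j, hj, rfl⟩
      have hzv : (z - 1).val < d := ZMod.val_lt _
      refine ⟨⟨by omega, ?_⟩, ?_⟩
      · calc (z - 1).val + 1 + j * d ≤ d + j * d := by omega
          _ = (j + 1) * d := by ring
          _ ≤ k * d := Nat.mul_le_mul_right _ hj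
      · push_cast [ZMod.natCast_self, ZMod.natCast_zmod_val]
        ring
  rw [himg, Finset.card_image_of_injective _ ?_, Finset.card_range]
  intro a b hab
  simp only at hab
  have := Nat.eq_of_mul_eq_mul_right hd (by omega : a * d = b * d)
  omega


lemma aux_filter_shift_card {N : ℕ} (hN : 0 < N) (a : ZMod N) (t : ZMod N) (z0 : ZMod N)
    (hz0 : z0 * a = t) :
    ((Finset.range N).filter (fun x : ℕ => (x : ZMod N) * a = t)).card
      = ((Finset.range N).filter (fun x : ℕ => (x : ZMod N) * a = 0)).card := by
  haveI : NeZero N := ⟨hN.ne'⟩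
  have hv : z0.val < N := ZMod.val_lt z0
  have hcastsub : ((N - z0.val : ℕ) : ZMod N) = - z0 := by
    rw [Nat.cast_sub hv.le, ZMod.natCast_self, ZMod.natCast_zmod_val]
    ring
  apply Finset.card_nbij' (fun x => (x + (N - z0.val)) % N) (fun x => (x + z0.val) % N)
  · intro x hx
    simp only [Finset.mem_coe, Finset.mem_filter, Finset.mem_range] at hx ⊢
    refine ⟨Nat.mod_lt _ hN, ?_⟩
    rw [ZMod.natCast_mod]
    push_cast [hcastsub]
    linear_combination hx.2 - hz0
  · intro x hx
    simp only [Finset.mem_coe, Finset.mem_filter, Finset.mem_range] at hx ⊢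
    refine ⟨Nat.mod_lt _ hN, ?_⟩
    rw [ZMod.natCast_mod]
    push_cast [ZMod.natCast_zmod_val]
    linear_combination hx.2 + hz0
  · intro x hx
    simp only [Finset.mem_coe, Finset.mem_filter, Finset.mem_range] at hx
    beta_reduce
    rw [Nat.mod_add_mod, show x + (N - z0.val) + z0.val = x + N by omega,
      Nat.add_mod_right, Nat.mod_eq_of_lt hx.1]
  · intro x hx
    simp only [Finset.mem_coe, Finset.mem_filter, Finset.mem_range] at hx
    beta_reduce
    rw [Nat.mod_add_mod, show x + z0.val + (N - z0.val) = x + N by omega,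
      Nat.add_mod_right, Nat.mod_eq_of_lt hx.1]


lemma aux_kernel_card {N : ℕ} (hN : 0 < N) (a : ℕ) (ha : 0 < a) :
    ((Finset.range N).filter (fun x : ℕ => (x : ZMod N) * (a : ZMod N) = 0)).card
      = Nat.gcd a N := by
  haveI : NeZero N := ⟨hN.ne'⟩
  set D := Nat.gcd a N with hD
  have hDpos : 0 < D := Nat.gcd_pos_of_pos_left _ ha
  have hDN : D ∣ N := Nat.gcd_dvd_right a N
  have hNDpos : 0 < N / D := Nat.div_pos (Nat.le_of_dvd hN hDN) hDpos
  have hcop : Nat.Coprime (a / D) (N / D) := Nat.coprime_div_gcd_div_gcd hDpos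
  have hkey : ∀ x : ℕ, ((x : ZMod N) * (a : ZMod N) = 0) ↔ ((x : ZMod (N / D)) = 0) := by
    intro x
    rw [← Nat.cast_mul, ZMod.natCast_eq_zero_iff, ZMod.natCast_eq_zero_iff]
    constructor
    · intro h
      have h1 : N / D * D ∣ x * (a / D) * D := by
        rw [Nat.div_mul_cancel hDN, mul_assoc, Nat.div_mul_cancel (Nat.gcd_dvd_left a N)]
        exact h
      have h2 : N / D ∣ x * (a / D) := (Nat.mul_dvd_mul_iff_right hDpos).1 h1
      exact hcop.symm.dvd_of_dvd_mul_right h2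
    · intro h
      have : N / D * D ∣ x * D := Nat.mul_dvd_mul_right h D
      rw [Nat.div_mul_cancel hDN] at this
      exact this.trans (Nat.mul_dvd_mul_left x (Nat.gcd_dvd_left a N))
  have : ((Finset.range N).filter (fun x : ℕ => (x : ZMod N) * (a : ZMod N) = 0))
      = ((Finset.range (D * (N / D))).filter (fun x : ℕ => (x : ZMod (N / D)) = 0)) := by
    rw [Nat.mul_div_cancel' hDN]
    exact Finset.filter_congr (fun x _ => by rw [hkey x])
  rw [this]
  exact aux_range_filter_cast_card (N / D) D hNDpos 0

lemma aux_solvable_iff {N : ℕ} (hN : 0 < N) (a : ℕ) (t : ZMod N) :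
    (∃ z : ZMod N, z * (a : ZMod N) = t) ↔
      (ZMod.castHom (Nat.gcd_dvd_right a N) (ZMod (Nat.gcd a N))) t = 0 := by
  haveI : NeZero N := ⟨hN.ne'⟩
  set D := Nat.gcd a N with hD
  constructor
  · rintro ⟨z, rfl⟩
    rw [map_mul, map_natCast, (ZMod.natCast_eq_zero_iff a D).2 (Nat.gcd_dvd_left a N),
      mul_zero]
  · intro h
    have ht : ((t.val : ℕ) : ZMod D) = 0 := by
      have := h
      rw [← ZMod.natCast_zmod_val t, map_natCast] at this
      exact this
    obtain ⟨k, hk⟩ := (ZMod.natCast_eq_zero_iff _ _).1 ht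
    have hbez : ((D : ℕ) : ZMod N) = (a : ZMod N) * ((Nat.gcdA a N : ℤ) : ZMod N) := by
      have hb := Nat.gcd_eq_gcd_ab a N
      have : ((D : ℤ) : ZMod N) = ((a * Nat.gcdA a N + N * Nat.gcdB a N : ℤ) : ZMod N) := by
        rw [← hb]
      push_cast [ZMod.natCast_self] at this
      rw [this]
      ring
    refine ⟨(k : ZMod N) * ((Nat.gcdA a N : ℤ) : ZMod N), ?_⟩
    calc (k : ZMod N) * ((Nat.gcdA a N : ℤ) : ZMod N) * (a : ZMod N)
        = (k : ZMod N) * ((D : ℕ) : ZMod N) := by rw [hbez]; ring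
      _ = ((D * k : ℕ) : ZMod N) := by push_cast; ring
      _ = ((t.val : ℕ) : ZMod N) := by rw [← hk]
      _ = t := ZMod.natCast_zmod_val t

lemma aux_linear_count {N : ℕ} (hN : 0 < N) (a : ℕ) (ha : 0 < a) (t : ZMod N)
    [Decidable (∃ z : ZMod N, z * (a : ZMod N) = t)] :
    ((Finset.range N).filter (fun x : ℕ => (x : ZMod N) * (a : ZMod N) = t)).card
      = if ∃ z : ZMod N, z * (a : ZMod N) = t then Nat.gcd a N else 0 := by
  split_ifs with h
  · obtain ⟨z0, hz0⟩ := h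
    rw [aux_filter_shift_card hN _ t z0 hz0, aux_kernel_card hN a ha]
  · rw [Finset.card_eq_zero, Finset.filter_eq_empty_iff]
    intro x _
    exact fun hx => h ⟨(x : ZMod N), hx⟩


lemma aux_main (N e b : ℕ) (hN : 0 < N) (he : 0 < e) (hb : 0 < b) (c : ZMod N) :
    (Finset.filter
        (fun xy : ℕ × ℕ =>
          ((xy.1 * (e / Nat.gcd b e) + xy.2 * (b / Nat.gcd b e) : ℕ) : ZMod N) = c)
        ((Finset.range N) ×ˢ (Finset.Icc 1 (Nat.gcd N e)))).card = Nat.gcd N e := by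
  haveI : NeZero N := ⟨hN.ne'⟩
  set g := Nat.gcd b e with hg
  set e' := e / g with he'def
  set b' := b / g with hb'def
  set G := Nat.gcd N e with hG
  set D := Nat.gcd e' N with hDdef
  have hgpos : 0 < g := Nat.gcd_pos_of_pos_left _ hb
  have he' : 0 < e' := Nat.div_pos (Nat.le_of_dvd he (Nat.gcd_dvd_right b e)) hgpos
  have hb'pos : 0 < b' := Nat.div_pos (Nat.le_of_dvd hb (Nat.gcd_dvd_left b e)) hgpos
  have hcop : Nat.Coprime b' e' := Nat.coprime_div_gcd_div_gcd hgpos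
  have hD : 0 < D := Nat.gcd_pos_of_pos_left _ he'
  haveI : NeZero D := ⟨hD.ne'⟩
  have hDN : D ∣ N := Nat.gcd_dvd_right e' N
  have he'e : e' ∣ e := ⟨g, (Nat.div_mul_cancel (Nat.gcd_dvd_right b e)).symm⟩
  have hDG : D ∣ G := Nat.dvd_gcd hDN ((Nat.gcd_dvd_left e' N).trans he'e)
  have hGpos : 0 < G := Nat.gcd_pos_of_pos_right _ he
  have hbD : Nat.Coprime b' D := hcop.coprime_dvd_right (Nat.gcd_dvd_left e' N)
  set u := ZMod.unitOfCoprime b' hbD with hu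
  set φ := ZMod.castHom hDN (ZMod D) with hφ
  set y0 : ZMod D := φ c * ↑u⁻¹ with hy0
  have hcond : ∀ y : ℕ,
      (∃ z : ZMod N, z * (e' : ZMod N) = c - ((y * b' : ℕ) : ZMod N)) ↔ ((y : ZMod D) = y0) := by
    intro y
    rw [aux_solvable_iff hN e' _]
    show ZMod.castHom (Nat.gcd_dvd_right e' N) (ZMod D) _ = 0 ↔ _
    have hcast : ZMod.castHom (Nat.gcd_dvd_right e' N) (ZMod D) = φ := rfl
    rw [hcast, map_sub, sub_eq_zero, map_natCast]
    push_cast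
    have hb'u : (b' : ZMod D) = ↑u := (ZMod.coe_unitOfCoprime b' hbD).symm
    rw [hb'u, hy0, eq_comm, Units.eq_mul_inv_iff_mul_eq]
  rw [Finset.card_filter, Finset.sum_product_right]
  have hstep : ∀ y ∈ Finset.Icc 1 G,
      (∑ x ∈ Finset.range N,
        if (((x, y).1 * e' + (x, y).2 * b' : ℕ) : ZMod N) = c then 1 else 0)
        = if (y : ZMod D) = y0 then D else 0 := by
    intro y _
    rw [← Finset.card_filter]
    have hfe : (Finset.range N).filter
          (fun x : ℕ => (((x, y).1 * e' + (x, y).2 * b' : ℕ) : ZMod N) = c)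
        = (Finset.range N).filter
          (fun x : ℕ => (x : ZMod N) * (e' : ZMod N) = c - ((y * b' : ℕ) : ZMod N)) := by
      apply Finset.filter_congr
      intro x _
      show (((x * e' + y * b' : ℕ) : ZMod N) = c) ↔ _
      rw [eq_sub_iff_add_eq]
      push_cast
      constructor <;> intro h <;> linear_combination h
    haveI : Decidable (∃ z : ZMod N, z * (e' : ZMod N) = c - ((y * b' : ℕ) : ZMod N)) :=
      Classical.propDecidable _
    rw [hfe, aux_linear_count hN e' he' _]
    exact if_congr (hcond y) rfl rfl
  rw [Finset.sum_congr rfl hstep, ← Finset.sum_filter, Finset.sum_const, smul_eq_mul]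
  have hcount : ((Finset.Icc 1 G).filter (fun y : ℕ => (y : ZMod D) = y0)).card = G / D := by
    have hGD : G = (G / D) * D := (Nat.div_mul_cancel hDG).symm
    conv_lhs => rw [hGD]
    exact aux_icc_filter_cast_card D (G / D) hD y0
  rw [hcount, Nat.div_mul_cancel hDG]


/-- Let `p` be prime, `p ∤ e`, `N = p^f - 1`, `g = gcd(b,e)`,
`G = gcd(N,e)`.  Then for every residue class `c mod N`, exactly `G` pairs `(x,y)` with
`0 ≤ x < N`, `1 ≤ y ≤ G` satisfy `x·(e/g) + y·(b/g) ≡ c (mod N)`. -/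
theorem statement9 (p f e b : ℕ) (hp : p.Prime) (hf : 0 < f) (he : 0 < e) (hb : 0 < b)
    (hpe : ¬ p ∣ e) (c : ZMod (p ^ f - 1)) :
    (Finset.filter
        (fun xy : ℕ × ℕ =>
          ((xy.1 * (e / Nat.gcd b e) + xy.2 * (b / Nat.gcd b e) : ℕ) : ZMod (p ^ f - 1)) = c)
        ((Finset.range (p ^ f - 1)) ×ˢ (Finset.Icc 1 (Nat.gcd (p ^ f - 1) e)))).card =
      Nat.gcd (p ^ f - 1) e := by
  have hp2 : 2 ≤ p := hp.two_le
  have hpf : 2 ≤ p ^ f := le_trans hp2 (Nat.le_self_pow hf.ne' p)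
  exact aux_main (p ^ f - 1) e b (by omega) he hb c

end
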